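/- Under the centered model with M_Z > 3 and for any λ ≥ 1, let β^h = ((1 + 1/‖μ‖₂²)/(‖μ‖₂⁴ + 6‖μ‖₂² + M_Z))^{1/2} μ. Then for β ∈ {β^h, −β^h} and every v ∈ ℝ^d, the Hessian of L^h_λ at (0, β) in the direction w = (0, v) satisfies w^⊤ ∇²L^h_λ(0, β) w ≥ [(2‖μ‖₂⁴ + (M_Z − 3)‖μ‖₂²)/(‖μ‖₂⁴ + 6‖μ‖₂² + M_Z)]·‖v‖₂², and the pure-α second derivative satisfies ∂²_{αα}L^h_λ(0, β) = 3(β^⊤μ)² + 3‖β‖₂² + λ − 1 > 0. -/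

import Mathlib

/-!
Along the line `t ↦ (α, β) + t • (a, v)` the loss is a quartic polynomial in `t` whose
coefficients are mixed moments of `α + ⟪β, X⟫` and `a + ⟪v, X⟫`, so the Hessian quadratic form is
`E[h''(α + ⟪β, X⟫) (a + ⟪v, X⟫)²] + λ a²` with `h''(x) = 3x² - 1`. In the centered model, `Y² = 1`
splits every such moment into a function of `Z` plus `Y` times one, and the second part has mean
zero by independence. What remains is computed from `E ⟪u, Z⟫⟪v, Z⟫ = ⟪u, v⟫` and from the
polarization of `E ⟪w, Z⟫⁴ = M_Z ‖w‖⁴`, which gives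
`E ⟪u, Z⟫²⟪v, Z⟫² = (M_Z / 3)(‖u‖²‖v‖² + 2⟪u, v⟫²)`. At `β = ±β^h` the form in direction `(0, v)`
is then the claimed multiple of `‖v‖²` plus a nonnegative multiple of `⟪v, μ⟫²`.
-/

open MeasureTheory ProbabilityTheory
open scoped RealInnerProductSpace

/-- `ℝ^d` with the Euclidean norm. -/
abbrev Vec (d : ℕ) := EuclideanSpace ℝ (Fin d)

/-- `ℝ × ℝ^d` with the Euclidean (ℓ²) norm, the domain of the loss `(α, β) ↦ L(α, β)`. -/
abbrev Pr (d : ℕ) := WithLp 2 (ℝ × Vec d)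

/-- Build the point `(α, β) ∈ ℝ × ℝ^d`. -/
noncomputable def mkp {d : ℕ} (α : ℝ) (β : Vec d) : Pr d :=
  (WithLp.equiv 2 (ℝ × Vec d)).symm (α, β)

/-- The quartic loss `h(x) = (x² - 1)² / 4`. -/
noncomputable def hq (x : ℝ) : ℝ := (x ^ 2 - 1) ^ 2 / 4

/-- The population loss `γ = (α, β) ↦ E g(α + β⊤X) + (λ/2) α²` built from a scalar loss `g`. -/
noncomputable def popLoss {d : ℕ} {Ω : Type*} [MeasurableSpace Ω] (P : Measure Ω)
    (X : Ω → Vec d) (g : ℝ → ℝ) (lam : ℝ) (γ : Pr d) : ℝ :=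
  (∫ ω, g ((WithLp.equiv 2 (ℝ × Vec d) γ).1 + ⟪(WithLp.equiv 2 (ℝ × Vec d) γ).2, X ω⟫) ∂P)
    + lam / 2 * ((WithLp.equiv 2 (ℝ × Vec d) γ).1) ^ 2

/-- The special direction `β^h = ((1 + 1/‖μ‖²)/(‖μ‖⁴ + 6‖μ‖² + M_Z))^{1/2} μ`. -/
noncomputable def betah {d : ℕ} (μ : Vec d) (MZ : ℝ) : Vec d :=
  Real.sqrt ((1 + 1 / ‖μ‖ ^ 2) / (‖μ‖ ^ 4 + 6 * ‖μ‖ ^ 2 + MZ)) • μ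

lemma iteratedDeriv_two_eq_of_quartic {f : ℝ → ℝ} {c₀ c₁ c₂ c₃ c₄ : ℝ}
    (hf : ∀ t, f t = c₀ + c₁ * t + c₂ * t ^ 2 + c₃ * t ^ 3 + c₄ * t ^ 4) :
    iteratedDeriv 2 f 0 = 2 * c₂ := by
  have hlin : iteratedDeriv 2 (fun t : ℝ => c₁ * t) 0 = 0 := by simp [iteratedDeriv_succ]
  rw [funext hf]
  simp (disch := fun_prop) [iteratedDeriv_fun_add, iteratedDeriv_const, hlin]
  ring

section Moments

variable {Ω : Type*} [MeasurableSpace Ω] {P : Measure Ω}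

@[fun_prop]
def HasMoments (f : Ω → ℝ) (P : Measure Ω) : Prop :=
  ∀ n : ℕ, Integrable (fun ω => f ω ^ n) P

namespace HasMoments

lemma integrable_pow_mul_pow {f g : Ω → ℝ} (hf : HasMoments f P) (hg : HasMoments g P)
    (j k : ℕ) :
    Integrable (fun ω => f ω ^ j * g ω ^ k) P := by
  have hfm : AEStronglyMeasurable f P := by simpa using (hf 1).aestronglyMeasurable
  have hgm : AEStronglyMeasurable g P := by simpa using (hg 1).aestronglyMeasurable
  refine (((hf (2 * j)).add (hg (2 * k))).div_const 2).mono' ((hfm.pow j).mul (hgm.pow k))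
    (ae_of_all _ fun ω => ?_)
  rw [Pi.add_apply, pow_mul', pow_mul', ← sq_abs (f ω ^ j), ← sq_abs (g ω ^ k), norm_mul,
    Real.norm_eq_abs, Real.norm_eq_abs]
  linarith [two_mul_le_add_sq |f ω ^ j| |g ω ^ k|]

lemma integrable {f : Ω → ℝ} (hf : HasMoments f P) : Integrable f P := by
  simpa using hf 1

@[fun_prop]
lemma const [IsFiniteMeasure P] (c : ℝ) : HasMoments (fun _ => c) P :=
  fun _ => integrable_const _

@[fun_prop]
lemma mul {f g : Ω → ℝ} (hf : HasMoments f P) (hg : HasMoments g P) :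
    HasMoments (fun ω => f ω * g ω) P := fun n => by
  simpa only [mul_pow] using hf.integrable_pow_mul_pow hg n n

@[fun_prop]
lemma add {f g : Ω → ℝ} (hf : HasMoments f P) (hg : HasMoments g P) :
    HasMoments (fun ω => f ω + g ω) P := fun n => by
  simp_rw [add_pow]
  exact integrable_finsetSum _ fun m _ => (hf.integrable_pow_mul_pow hg _ _).mul_const _

@[fun_prop]
lemma neg {f : Ω → ℝ} (hf : HasMoments f P) : HasMoments (fun ω => -f ω) P :=
  fun n => ((hf n).const_mul ((-1) ^ n)).congr (ae_of_all _ fun ω => (neg_pow (f ω) n).symm)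

@[fun_prop]
lemma sub {f g : Ω → ℝ} (hf : HasMoments f P) (hg : HasMoments g P) :
    HasMoments (fun ω => f ω - g ω) P := by
  simpa only [← sub_eq_add_neg] using hf.add hg.neg

@[fun_prop]
lemma pow {f : Ω → ℝ} (hf : HasMoments f P) (k : ℕ) : HasMoments (fun ω => f ω ^ k) P :=
  fun n => by simpa only [← pow_mul] using hf (k * n)

@[fun_prop]
lemma div_const {f : Ω → ℝ} (hf : HasMoments f P) (c : ℝ) : HasMoments (fun ω => f ω / c) P :=
  fun n => by simpa only [div_pow] using (hf n).div_const _

lemma of_abs_le [IsFiniteMeasure P] {f : Ω → ℝ} (hf : AEStronglyMeasurable f P)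
    {C : ℝ} (hC : ∀ ω, |f ω| ≤ C) : HasMoments f P := fun n =>
  .of_bound (hf.pow n) (C ^ n) (ae_of_all _ fun ω => by
    simpa only [norm_pow, Real.norm_eq_abs] using pow_le_pow_left₀ (abs_nonneg _) (hC ω) n)

lemma of_integrable_abs_rpow [IsFiniteMeasure P] {f : Ω → ℝ}
    (hf : AEStronglyMeasurable f P) (h : ∀ p : ℝ, 1 ≤ p → Integrable (fun ω => |f ω| ^ p) P) :
    HasMoments f P := by
  rintro (_ | n)
  · simp
  · refine (integrable_norm_iff (by fun_prop)).1 ?_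
    simpa only [Real.rpow_natCast, norm_pow, Real.norm_eq_abs] using h (n + 1 : ℕ) (by simp)

end HasMoments

lemma exists_quartic_integral_hq_add_mul [IsFiniteMeasure P] {a b : Ω → ℝ}
    (ha : HasMoments a P) (hb : HasMoments b P) :
    ∃ c₀ c₁ c₃ c₄ : ℝ, ∀ t : ℝ, ∫ ω, hq (a ω + t * b ω) ∂P
      = c₀ + c₁ * t + (∫ ω, (3 * a ω ^ 2 - 1) * b ω ^ 2 ∂P) / 2 * t ^ 2 + c₃ * t ^ 3
        + c₄ * t ^ 4 := by
  refine ⟨∫ ω, hq (a ω) ∂P, ∫ ω, (a ω ^ 2 - 1) * a ω * b ω ∂P, ∫ ω, a ω * b ω ^ 3 ∂P,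
    ∫ ω, b ω ^ 4 / 4 ∂P, fun t => ?_⟩
  have hpt : ∀ ω, hq (a ω + t * b ω) = hq (a ω) + (a ω ^ 2 - 1) * a ω * b ω * t
      + (3 * a ω ^ 2 - 1) * b ω ^ 2 / 2 * t ^ 2 + a ω * b ω ^ 3 * t ^ 3
      + b ω ^ 4 / 4 * t ^ 4 := fun ω => by
    unfold hq; ring
  simp_rw [hpt]
  rw [integral_add, integral_add, integral_add, integral_add, integral_mul_const,
    integral_mul_const, integral_mul_const, integral_mul_const, integral_div]
  all_goals (try unfold hq); exact HasMoments.integrable (by fun_prop)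

end Moments

lemma popLoss_mkp_add_smul {d : ℕ} {Ω : Type*} [MeasurableSpace Ω] (P : Measure Ω)
    (X : Ω → Vec d) (g : ℝ → ℝ) (lam α a t : ℝ) (β v : Vec d) :
    popLoss P X g lam (mkp α β + t • mkp a v)
      = ∫ ω, g (α + ⟪β, X ω⟫ + t * (a + ⟪v, X ω⟫)) ∂P + lam / 2 * (α + t * a) ^ 2 := by
  simp only [popLoss, mkp, WithLp.equiv_apply, WithLp.equiv_symm_apply, WithLp.ofLp_add,
    WithLp.ofLp_smul, Prod.fst_add, Prod.snd_add, Prod.smul_fst, Prod.smul_snd, smul_eq_mul,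
    inner_add_left, real_inner_smul_left]
  ring_nf

lemma iteratedDeriv_two_popLoss_hq {d : ℕ} {Ω : Type*} [MeasurableSpace Ω] (P : Measure Ω)
    [IsFiniteMeasure P] {X : Ω → Vec d} (hX : ∀ u, HasMoments (fun ω => ⟪u, X ω⟫) P)
    (lam α a : ℝ) (β v : Vec d) :
    iteratedDeriv 2 (fun t : ℝ => popLoss P X hq lam (mkp α β + t • mkp a v)) 0
      = ∫ ω, (3 * (α + ⟪β, X ω⟫) ^ 2 - 1) * (a + ⟪v, X ω⟫) ^ 2 ∂P + lam * a ^ 2 := by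
  obtain ⟨c₀, c₁, c₃, c₄, hc⟩ := exists_quartic_integral_hq_add_mul (P := P)
    (a := fun ω => α + ⟪β, X ω⟫) (b := fun ω => a + ⟪v, X ω⟫) (by fun_prop) (by fun_prop)
  rw [iteratedDeriv_two_eq_of_quartic (c₀ := c₀ + lam / 2 * α ^ 2) (c₁ := c₁ + lam * α * a)
    (c₂ := (∫ ω, (3 * (α + ⟪β, X ω⟫) ^ 2 - 1) * (a + ⟪v, X ω⟫) ^ 2 ∂P) / 2 + lam / 2 * a ^ 2)
    (c₃ := c₃) (c₄ := c₄) fun t => by rw [popLoss_mkp_add_smul, hc]; ring]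
  ring

section InnerProductSpace

variable {Ω : Type*} [MeasurableSpace Ω] {P : Measure Ω}
  {E : Type*} [NormedAddCommGroup E] [InnerProductSpace ℝ E] {Z : Ω → E}

lemma hasMoments_inner_of_norm_eq_one [IsFiniteMeasure P] (hZ : AEStronglyMeasurable Z P)
    (h : ∀ u : E, ‖u‖ = 1 → ∀ p : ℝ, 1 ≤ p → Integrable (fun ω => |⟪u, Z ω⟫| ^ p) P) (u : E) :
    HasMoments (fun ω => ⟪u, Z ω⟫) P := by
  rcases eq_or_ne u 0 with rfl | hu
  · simpa using HasMoments.const (P := P) 0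
  have hw : HasMoments (fun ω => ⟪‖u‖⁻¹ • u, Z ω⟫) P :=
    .of_integrable_abs_rpow (by fun_prop) (h _ (norm_smul_inv_norm hu))
  have hu' : ‖u‖ ≠ 0 := norm_ne_zero_iff.mpr hu
  convert (HasMoments.const ‖u‖).mul hw using 2 with ω
  rw [real_inner_smul_left, mul_inv_cancel_left₀ hu']

lemma integral_inner_pow_eq_of_norm_eq_one {n : ℕ} (hn : n ≠ 0) {M : ℝ}
    (h : ∀ u : E, ‖u‖ = 1 → ∫ ω, ⟪u, Z ω⟫ ^ n ∂P = M) (w : E) :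
    ∫ ω, ⟪w, Z ω⟫ ^ n ∂P = M * ‖w‖ ^ n := by
  rcases eq_or_ne w 0 with rfl | hw
  · simp [hn]
  have hw' : ‖w‖ ≠ 0 := norm_ne_zero_iff.mpr hw
  have := h _ (norm_smul_inv_norm (𝕜 := ℝ) hw)
  simp_rw [real_inner_smul_left, mul_pow, integral_const_mul, inv_pow, RCLike.ofReal_real_eq_id,
    id] at this
  rw [← this]
  field_simp

lemma integral_inner_sq_mul_inner_sq {M : ℝ}
    (h4 : ∀ w : E, Integrable (fun ω => ⟪w, Z ω⟫ ^ 4) P)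
    (hM : ∀ w : E, ∫ ω, ⟪w, Z ω⟫ ^ 4 ∂P = M * ‖w‖ ^ 4) (u v : E) :
    ∫ ω, ⟪u, Z ω⟫ ^ 2 * ⟪v, Z ω⟫ ^ 2 ∂P = M / 3 * (‖u‖ ^ 2 * ‖v‖ ^ 2 + 2 * ⟪u, v⟫ ^ 2) := by
  have hpol : ∀ ω, ⟪u, Z ω⟫ ^ 2 * ⟪v, Z ω⟫ ^ 2 = (⟪u + v, Z ω⟫ ^ 4 + ⟪u - v, Z ω⟫ ^ 4
      - 2 * ⟪u, Z ω⟫ ^ 4 - 2 * ⟪v, Z ω⟫ ^ 4) / 12 := fun ω => by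
    rw [inner_add_left, inner_sub_left]; ring
  simp_rw [hpol]
  rw [integral_div, integral_sub, integral_sub, integral_add, integral_const_mul,
    integral_const_mul, hM, hM, hM, hM]
  · rw [show ‖u + v‖ ^ 4 = (‖u + v‖ ^ 2) ^ 2 by ring, show ‖u - v‖ ^ 4 = (‖u - v‖ ^ 2) ^ 2 by ring,
      norm_add_sq_real, norm_sub_sq_real]
    ring
  all_goals fun_prop

end InnerProductSpace

lemma integral_eq_zero_of_eq_one_or_eq_neg_one {Ω : Type*} [MeasurableSpace Ω] {P : Measure Ω}
    [IsProbabilityMeasure P] {Y : Ω → ℝ} (hY : Measurable Y) (hsign : ∀ ω, Y ω = 1 ∨ Y ω = -1)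
    (hhalf : P {ω | Y ω = 1} = 1 / 2) : ∫ ω, Y ω ∂P = 0 := by
  have hs : MeasurableSet {ω | Y ω = 1} := hY (measurableSet_singleton 1)
  have hind : Y = fun ω => {ω | Y ω = 1}.indicator (fun _ => (2 : ℝ)) ω - 1 := by
    ext ω
    rcases hsign ω with h | h <;> norm_num [Set.indicator, h]
  rw [hind, integral_sub ((integrable_const _).indicator hs) (integrable_const _),
    integral_indicator_const _ hs, measureReal_def, hhalf]
  simp

section CenteredModel

variable {Ω : Type*} [MeasurableSpace Ω] {P : Measure Ω}
  {E : Type*} [NormedAddCommGroup E] [InnerProductSpace ℝ E] [MeasurableSpace E]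

structure IsCenteredModel (P : Measure Ω) (Y : Ω → ℝ) (Z X : Ω → E) (μ : E) : Prop where
  measurable_Y : Measurable Y
  measurable_Z : Measurable Z
  sign : ∀ ω, Y ω = 1 ∨ Y ω = -1
  integral_Y : ∫ ω, Y ω ∂P = 0
  indepFun : IndepFun Y Z P
  hasMoments_inner : ∀ u : E, HasMoments (fun ω => ⟪u, Z ω⟫) P
  integral_inner_mul_inner : ∀ u v : E, ∫ ω, ⟪u, Z ω⟫ * ⟪v, Z ω⟫ ∂P = ⟪u, v⟫
  eq_smul_add : ∀ ω, X ω = Y ω • μ + Z ω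

namespace IsCenteredModel

variable {Y : Ω → ℝ} {Z X : Ω → E} {μ : E}

lemma abs_Y (h : IsCenteredModel P Y Z X μ) (ω : Ω) : |Y ω| = 1 := by
  rcases h.sign ω with hY | hY <;> simp [hY]

lemma inner_X (h : IsCenteredModel P Y Z X μ) (u : E) (ω : Ω) :
    ⟪u, X ω⟫ = Y ω * ⟪u, μ⟫ + ⟪u, Z ω⟫ := by
  rw [h.eq_smul_add, inner_add_right, real_inner_smul_right]

lemma hasMoments_inner_X [IsFiniteMeasure P] (h : IsCenteredModel P Y Z X μ) (u : E) :
    HasMoments (fun ω => ⟪u, X ω⟫) P := by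
  have hY : HasMoments Y P :=
    .of_abs_le h.measurable_Y.aestronglyMeasurable fun ω => (h.abs_Y ω).le
  have hZ := h.hasMoments_inner u
  simp_rw [h.inner_X]
  fun_prop

lemma integral_add_mul_comp (h : IsCenteredModel P Y Z X μ) {F G : E → ℝ}
    (hF : Integrable (fun ω => F (Z ω)) P) (hG : Measurable G)
    (hGi : Integrable (fun ω => G (Z ω)) P) :
    ∫ ω, (F (Z ω) + Y ω * G (Z ω)) ∂P = ∫ ω, F (Z ω) ∂P := by
  have hYG : Integrable (fun ω => Y ω * G (Z ω)) P :=
    hGi.bdd_mul h.measurable_Y.aestronglyMeasurable (ae_of_all _ fun ω => (h.abs_Y ω).le)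
  have hodd : ∫ ω, Y ω * G (Z ω) ∂P = 0 := by
    simpa [h.integral_Y] using h.indepFun.integral_fun_comp_mul_comp (f := id)
      h.measurable_Y.aemeasurable h.measurable_Z.aemeasurable aestronglyMeasurable_id
      hG.aestronglyMeasurable
  rw [integral_add hF hYG, hodd, add_zero]

lemma integral_inner_sq (h : IsCenteredModel P Y Z X μ) (u : E) :
    ∫ ω, ⟪u, Z ω⟫ ^ 2 ∂P = ‖u‖ ^ 2 := by
  simpa [← sq] using h.integral_inner_mul_inner u u

lemma integral_inner_X_sq [OpensMeasurableSpace E] [IsProbabilityMeasure P]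
    (h : IsCenteredModel P Y Z X μ) (u : E) :
    ∫ ω, ⟪u, X ω⟫ ^ 2 ∂P = ⟪u, μ⟫ ^ 2 + ‖u‖ ^ 2 := by
  have hsplit : ∀ ω, ⟪u, X ω⟫ ^ 2
      = ⟪u, μ⟫ ^ 2 + ⟪u, Z ω⟫ ^ 2 + Y ω * (2 * ⟪u, μ⟫ * ⟪u, Z ω⟫) := fun ω => by
    rcases h.sign ω with hY | hY <;> rw [h.inner_X, hY] <;> ring
  have hu := h.hasMoments_inner u
  simp_rw [hsplit]
  rw [h.integral_add_mul_comp (F := fun z => ⟪u, μ⟫ ^ 2 + ⟪u, z⟫ ^ 2)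
      (G := fun z => 2 * ⟪u, μ⟫ * ⟪u, z⟫) (HasMoments.integrable (by fun_prop)) (by fun_prop)
      (HasMoments.integrable (by fun_prop)),
    integral_add (by fun_prop) (HasMoments.integrable (by fun_prop)), h.integral_inner_sq]
  simp

lemma integral_inner_X_sq_mul_inner_X_sq [OpensMeasurableSpace E] [IsProbabilityMeasure P]
    (h : IsCenteredModel P Y Z X μ) {M : ℝ} (hM : ∀ w : E, ∫ ω, ⟪w, Z ω⟫ ^ 4 ∂P = M * ‖w‖ ^ 4)
    (u v : E) :
    ∫ ω, ⟪u, X ω⟫ ^ 2 * ⟪v, X ω⟫ ^ 2 ∂P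
      = ⟪u, μ⟫ ^ 2 * ⟪v, μ⟫ ^ 2 + ⟪u, μ⟫ ^ 2 * ‖v‖ ^ 2 + ⟪v, μ⟫ ^ 2 * ‖u‖ ^ 2
        + 4 * ⟪u, μ⟫ * ⟪v, μ⟫ * ⟪u, v⟫ + M / 3 * (‖u‖ ^ 2 * ‖v‖ ^ 2 + 2 * ⟪u, v⟫ ^ 2) := by
  set p := ⟪u, μ⟫
  set q := ⟪v, μ⟫
  have hsplit : ∀ ω, ⟪u, X ω⟫ ^ 2 * ⟪v, X ω⟫ ^ 2
      = p ^ 2 * q ^ 2 + p ^ 2 * ⟪v, Z ω⟫ ^ 2 + q ^ 2 * ⟪u, Z ω⟫ ^ 2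
          + 4 * p * q * (⟪u, Z ω⟫ * ⟪v, Z ω⟫) + ⟪u, Z ω⟫ ^ 2 * ⟪v, Z ω⟫ ^ 2
        + Y ω * (2 * p * q ^ 2 * ⟪u, Z ω⟫ + 2 * p ^ 2 * q * ⟪v, Z ω⟫
          + 2 * p * ⟪u, Z ω⟫ * ⟪v, Z ω⟫ ^ 2 + 2 * q * ⟪u, Z ω⟫ ^ 2 * ⟪v, Z ω⟫) := fun ω => by
    rcases h.sign ω with hY | hY <;> rw [h.inner_X, h.inner_X, hY] <;> ring
  have hu := h.hasMoments_inner u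
  have hv := h.hasMoments_inner v
  have h4 : ∀ w : E, Integrable (fun ω => ⟪w, Z ω⟫ ^ 4) P := fun w => h.hasMoments_inner w 4
  simp_rw [hsplit]
  rw [h.integral_add_mul_comp
      (F := fun z => p ^ 2 * q ^ 2 + p ^ 2 * ⟪v, z⟫ ^ 2 + q ^ 2 * ⟪u, z⟫ ^ 2
        + 4 * p * q * (⟪u, z⟫ * ⟪v, z⟫) + ⟪u, z⟫ ^ 2 * ⟪v, z⟫ ^ 2)
      (G := fun z => 2 * p * q ^ 2 * ⟪u, z⟫ + 2 * p ^ 2 * q * ⟪v, z⟫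
        + 2 * p * ⟪u, z⟫ * ⟪v, z⟫ ^ 2 + 2 * q * ⟪u, z⟫ ^ 2 * ⟪v, z⟫)
      (HasMoments.integrable (by fun_prop)) (by fun_prop) (HasMoments.integrable (by fun_prop))]
  rw [integral_add, integral_add, integral_add, integral_add, integral_const, integral_const_mul,
    integral_const_mul, integral_const_mul, h.integral_inner_sq, h.integral_inner_sq,
    h.integral_inner_mul_inner, integral_inner_sq_mul_inner_sq h4 hM]
  · simp
  all_goals exact HasMoments.integrable (by fun_prop)

end IsCenteredModel

end CenteredModel

section Hessian

variable {d : ℕ} {Ω : Type*} [MeasurableSpace Ω] {P : Measure Ω} [IsProbabilityMeasure P]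
  {Y : Ω → ℝ} {Z X : Ω → Vec d} {μ : Vec d}

lemma IsCenteredModel.iteratedDeriv_two_popLoss_hq_beta (h : IsCenteredModel P Y Z X μ) {M : ℝ}
    (hM : ∀ w : Vec d, ∫ ω, ⟪w, Z ω⟫ ^ 4 ∂P = M * ‖w‖ ^ 4) (lam : ℝ) (β v : Vec d) :
    iteratedDeriv 2 (fun t : ℝ => popLoss P X hq lam (mkp 0 β + t • mkp 0 v)) 0
      = 3 * (⟪β, μ⟫ ^ 2 * ⟪v, μ⟫ ^ 2 + ⟪β, μ⟫ ^ 2 * ‖v‖ ^ 2 + ⟪v, μ⟫ ^ 2 * ‖β‖ ^ 2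
        + 4 * ⟪β, μ⟫ * ⟪v, μ⟫ * ⟪β, v⟫ + M / 3 * (‖β‖ ^ 2 * ‖v‖ ^ 2 + 2 * ⟪β, v⟫ ^ 2))
        - (⟪v, μ⟫ ^ 2 + ‖v‖ ^ 2) := by
  have hβ := h.hasMoments_inner_X β
  have hv := h.hasMoments_inner_X v
  rw [iteratedDeriv_two_popLoss_hq P h.hasMoments_inner_X]
  simp only [zero_add, sub_mul, mul_assoc, one_mul]
  rw [integral_sub (HasMoments.integrable (by fun_prop)) (HasMoments.integrable (by fun_prop)),
    integral_const_mul, h.integral_inner_X_sq_mul_inner_X_sq hM, h.integral_inner_X_sq]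
  ring

lemma IsCenteredModel.iteratedDeriv_two_popLoss_hq_alpha (h : IsCenteredModel P Y Z X μ)
    (lam : ℝ) (β : Vec d) :
    iteratedDeriv 2 (fun t : ℝ => popLoss P X hq lam (mkp 0 β + t • mkp 1 0)) 0
      = 3 * ⟪β, μ⟫ ^ 2 + 3 * ‖β‖ ^ 2 + lam - 1 := by
  have hβ := h.hasMoments_inner_X β
  rw [iteratedDeriv_two_popLoss_hq P h.hasMoments_inner_X]
  simp only [zero_add, add_zero, mul_one, one_pow, inner_zero_left]
  rw [integral_sub (HasMoments.integrable (by fun_prop)) (integrable_const 1),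
    integral_const_mul, h.integral_inner_X_sq]
  simp
  ring

end Hessian

lemma exists_smul_of_mem_betah {d : ℕ} {μ β : Vec d} {MZ : ℝ} (hMZ : 0 ≤ MZ)
    (hβ : β ∈ ({betah μ MZ, -(betah μ MZ)} : Set (Vec d))) :
    ∃ c : ℝ, β = c • μ ∧ c ^ 2 = (1 + 1 / ‖μ‖ ^ 2) / (‖μ‖ ^ 4 + 6 * ‖μ‖ ^ 2 + MZ) := by
  have hnn : 0 ≤ (1 + 1 / ‖μ‖ ^ 2) / (‖μ‖ ^ 4 + 6 * ‖μ‖ ^ 2 + MZ) := by positivity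
  rcases hβ with rfl | rfl
  · exact ⟨_, rfl, Real.sq_sqrt hnn⟩
  · exact ⟨-_, by rw [betah, neg_smul], by rw [neg_sq, Real.sq_sqrt hnn]⟩

lemma curvature_bound_of_sq_eq {n M c : ℝ} (hn : 0 < n) (hM : 0 ≤ M)
    (hc : c ^ 2 = (1 + 1 / n ^ 2) / (n ^ 4 + 6 * n ^ 2 + M)) (q V : ℝ) :
    (2 * n ^ 4 + (M - 3) * n ^ 2) / (n ^ 4 + 6 * n ^ 2 + M) * V
      ≤ (c ^ 2 * n ^ 2 * (3 * n ^ 2 + M) - 1) * V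
        + (c ^ 2 * (3 * n ^ 4 + 15 * n ^ 2 + 2 * M) - 1) * q ^ 2 := by
  have hD : 0 < n ^ 4 + 6 * n ^ 2 + M := by positivity
  have hc' : c ^ 2 * (n ^ 2 * (n ^ 4 + 6 * n ^ 2 + M)) = n ^ 2 + 1 := by
    rw [hc]; field_simp
  have hV : (2 * n ^ 4 + (M - 3) * n ^ 2) / (n ^ 4 + 6 * n ^ 2 + M)
      = c ^ 2 * n ^ 2 * (3 * n ^ 2 + M) - 1 := by
    rw [div_eq_iff hD.ne']
    linear_combination (-(3 * n ^ 2 + M)) * hc'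
  have hq : 0 ≤ c ^ 2 * (3 * n ^ 4 + 15 * n ^ 2 + 2 * M) - 1 := by
    have hmul : (c ^ 2 * (3 * n ^ 4 + 15 * n ^ 2 + 2 * M) - 1)
        * (n ^ 2 * (n ^ 4 + 6 * n ^ 2 + M))
        = 2 * n ^ 6 + 12 * n ^ 4 + 15 * n ^ 2 + M * n ^ 2 + 2 * M := by
      linear_combination (3 * n ^ 4 + 15 * n ^ 2 + 2 * M) * hc'
    exact nonneg_of_mul_nonneg_left (by rw [hmul]; positivity) (by positivity)
  rw [hV]
  linarith [mul_nonneg hq (sq_nonneg q)]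

theorem quartic_population_loss_minima_curvature_general
    {d : ℕ} {Ω : Type*} [MeasurableSpace Ω] (P : Measure Ω) [IsProbabilityMeasure P]
    (Y : Ω → ℝ) (Z : Ω → Vec d) (X : Ω → Vec d) (μ : Vec d) (M MZ lam : ℝ)
    (hμ : μ ≠ 0)
    (hY : Measurable Y) (hZ : Measurable Z)
    (hYpm : ∀ ω, Y ω = 1 ∨ Y ω = -1)
    (hY1 : P {ω | Y ω = 1} = 1 / 2)
    (hindep : IndepFun Y Z P)
    (hZsg : ∀ u : Vec d, ‖u‖ = 1 → ∀ p : ℝ, 1 ≤ p →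
      Integrable (fun ω => |⟪u, Z ω⟫| ^ p) P ∧
        (∫ ω, |⟪u, Z ω⟫| ^ p ∂P) ^ (1 / p) ≤ Real.sqrt p * M)
    (hZcov : ∀ u v : Vec d, (∫ ω, ⟪u, Z ω⟫ * ⟪v, Z ω⟫ ∂P) = ⟪u, v⟫)
    (hMZ : ∀ u : Vec d, ‖u‖ = 1 → (∫ ω, ⟪u, Z ω⟫ ^ 4 ∂P) = MZ)
    (hX : ∀ ω, X ω = Y ω • μ + Z ω)
    (hMZ3 : 3 < MZ) (hlam1 : 1 ≤ lam) :
    ∀ β ∈ ({betah μ MZ, -(betah μ MZ)} : Set (Vec d)),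
      (∀ v : Vec d,
        ((2 * ‖μ‖ ^ 4 + (MZ - 3) * ‖μ‖ ^ 2) / (‖μ‖ ^ 4 + 6 * ‖μ‖ ^ 2 + MZ)) * ‖v‖ ^ 2
          ≤ iteratedDeriv 2
              (fun t : ℝ => popLoss P X hq lam (mkp 0 β + t • mkp 0 v)) 0) ∧
      (iteratedDeriv 2
          (fun t : ℝ => popLoss P X hq lam (mkp 0 β + t • mkp 1 0)) 0
        = 3 * ⟪β, μ⟫ ^ 2 + 3 * ‖β‖ ^ 2 + lam - 1) ∧
      (0 < 3 * ⟪β, μ⟫ ^ 2 + 3 * ‖β‖ ^ 2 + lam - 1) := by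
  have h : IsCenteredModel P Y Z X μ :=
    { measurable_Y := hY
      measurable_Z := hZ
      sign := hYpm
      integral_Y := integral_eq_zero_of_eq_one_or_eq_neg_one hY hYpm hY1
      indepFun := hindep
      hasMoments_inner := hasMoments_inner_of_norm_eq_one hZ.aestronglyMeasurable
        fun u hu p hp => (hZsg u hu p hp).1
      integral_inner_mul_inner := hZcov
      eq_smul_add := hX }
  have hμ' : 0 < ‖μ‖ := norm_pos_iff.2 hμ
  intro β hβ
  obtain ⟨c, rfl, hc⟩ := exists_smul_of_mem_betah (by linarith) hβ
  refine ⟨fun v => ?_, h.iteratedDeriv_two_popLoss_hq_alpha lam _, ?_⟩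
  · rw [h.iteratedDeriv_two_popLoss_hq_beta
      (integral_inner_pow_eq_of_norm_eq_one four_ne_zero hMZ)]
    simp only [real_inner_smul_left, norm_smul, real_inner_self_eq_norm_sq, real_inner_comm μ v,
      Real.norm_eq_abs, mul_pow, sq_abs]
    exact (curvature_bound_of_sq_eq hμ' (by linarith) hc ⟪μ, v⟫ (‖v‖ ^ 2)).trans_eq (by ring)
  · have hc0 : 0 < c ^ 2 := hc ▸ by positivity
    have : 0 < ‖c • μ‖ ^ 2 := by
      rw [norm_smul, mul_pow, Real.norm_eq_abs, sq_abs]; positivity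
    linarith [sq_nonneg ⟪c • μ, μ⟫]

/-- under the centered model with `M_Z > 3` and `λ ≥ 1`, at `(0, ±β^h)` the
Hessian of `L^h_λ` in every direction `w = (0, v)` is at least
`[(2‖μ‖⁴ + (M_Z − 3)‖μ‖²)/(‖μ‖⁴ + 6‖μ‖² + M_Z)]·‖v‖²`, and the pure-α second derivative
equals `3(β⊤μ)² + 3‖β‖² + λ − 1 > 0`. -/
theorem quartic_population_loss_minima_curvature
    {d : ℕ} {Ω : Type*} [MeasurableSpace Ω] (P : Measure Ω) [IsProbabilityMeasure P]
    (Y : Ω → ℝ) (Z : Ω → Vec d) (X : Ω → Vec d) (μ : Vec d) (M MZ lam : ℝ)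
    (hμ : μ ≠ 0) (hlam : 0 ≤ lam)
    (hY : Measurable Y) (hZ : Measurable Z)
    (hYpm : ∀ ω, Y ω = 1 ∨ Y ω = -1)
    (hY1 : P {ω | Y ω = 1} = 1 / 2) (hY2 : P {ω | Y ω = -1} = 1 / 2)
    (hindep : IndepFun Y Z P)
    (hZsg : ∀ u : Vec d, ‖u‖ = 1 → ∀ p : ℝ, 1 ≤ p →
      Integrable (fun ω => |⟪u, Z ω⟫| ^ p) P ∧
        (∫ ω, |⟪u, Z ω⟫| ^ p ∂P) ^ (1 / p) ≤ Real.sqrt p * M)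
    (hZmean : (∫ ω, Z ω ∂P) = 0)
    (hZcov : ∀ u v : Vec d, (∫ ω, ⟪u, Z ω⟫ * ⟪v, Z ω⟫ ∂P) = ⟪u, v⟫)
    (hZsym : ∀ O : Vec d ≃ₗᵢ[ℝ] Vec d,
      Measure.map (fun ω => O (Z ω)) P = Measure.map Z P)
    (hMZ : ∀ u : Vec d, ‖u‖ = 1 → (∫ ω, ⟪u, Z ω⟫ ^ 4 ∂P) = MZ)
    (hX : ∀ ω, X ω = Y ω • μ + Z ω)
    (hMZ3 : 3 < MZ) (hlam1 : 1 ≤ lam) :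
    ∀ β ∈ ({betah μ MZ, -(betah μ MZ)} : Set (Vec d)),
      (∀ v : Vec d,
        ((2 * ‖μ‖ ^ 4 + (MZ - 3) * ‖μ‖ ^ 2) / (‖μ‖ ^ 4 + 6 * ‖μ‖ ^ 2 + MZ)) * ‖v‖ ^ 2
          ≤ iteratedDeriv 2
              (fun t : ℝ => popLoss P X hq lam (mkp 0 β + t • mkp 0 v)) 0) ∧
      (iteratedDeriv 2
          (fun t : ℝ => popLoss P X hq lam (mkp 0 β + t • mkp 1 0)) 0
        = 3 * ⟪β, μ⟫ ^ 2 + 3 * ‖β‖ ^ 2 + lam - 1) ∧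
      (0 < 3 * ⟪β, μ⟫ ^ 2 + 3 * ‖β‖ ^ 2 + lam - 1) :=
  quartic_population_loss_minima_curvature_general P Y Z X μ M MZ lam hμ hY hZ hYpm hY1 hindep hZsg
    hZcov hMZ hX hMZ3 hlam1
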